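/- arXiv:math/0112234 — 4 statements merged into one kernel-verified Lean document; each statement's English description precedes it below -/
import Mathlib

section
/- Let X be simple random walk on ℤ² started at a vertex u_1, stopped on first exiting a finite domain D, and let k be the last time n with X(n) = u_1. Then the path (X(k+j))_{j≥0} after the last visit to u_1 is independent of the initial segment X[0,k]. -/
open scoped ENNReal Classical

/-- Vertices of the grid `ℤ²`. -/
abbrev V2 : Type := ℤ × ℤ

/-- Grid adjacency in `ℤ²`. -/
def gadj (p q : V2) : Prop := (p.1 - q.1).natAbs + (p.2 - q.2).natAbs = 1

instance : DecidableRel gadj := fun p q => by unfold gadj; infer_instance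

/-- Probability weight of a nearest-neighbor path of simple random walk on `ℤ²`:
`(1/4)^(number of steps)` if all steps are nearest-neighbor steps, and `0` otherwise. -/
noncomputable def wt (w : List V2) : ℝ≥0∞ :=
  if List.Chain' gadj w then (4 : ℝ≥0∞)⁻¹ ^ (w.length - 1) else 0

/-- `w` is a path of simple random walk started at `a` and stopped upon first exiting the
finite domain `D`: every vertex but the last lies in `D` and the last vertex is outside `D`. -/
def IsStoppedWalk (D : Finset V2) (a : V2) (w : List V2) : Prop :=
  w.head? = some a ∧ (∀ x ∈ w.dropLast, x ∈ D) ∧ (∀ z, w.getLast? = some z → z ∉ D)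

/-- Probability (total weight) of the set of stopped walks from `a` in `D` satisfying `E`. -/
noncomputable def prW (D : Finset V2) (a : V2) (E : List V2 → Prop) : ℝ≥0∞ :=
  ∑' w : List V2, if IsStoppedWalk D a w ∧ E w then wt w else 0

/-- Green's function `G_D(a,v)`: expected number of visits to `v` by simple random walk
started at `a` and stopped upon exiting `D`. -/
noncomputable def green (D : Finset V2) (a v : V2) : ℝ≥0∞ :=
  ∑' w : List V2, if IsStoppedWalk D a w then wt w * (w.count v : ℝ≥0∞) else 0

/-- `H_D(v,u)`: probability that simple random walk started at `v`, stopped at its first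
exit from `D`, visits `u`. -/
noncomputable def hitPr (D : Finset V2) (v u : V2) : ℝ≥0∞ :=
  prW D v (fun w => u ∈ w)

/-- The strict suffix of `w` after the last occurrence of `u`. -/
def afterLast (u : V2) (w : List V2) : List V2 :=
  (w.reverse.takeWhile (fun y => y ≠ u)).reverse

/-- The part of the walk from the last visit to `u` on (including that visit). -/
def sufLast (u : V2) (w : List V2) : List V2 := u :: afterLast u w

/-- The initial part of the walk up to (and including) the last visit to `u`. -/
def preLast (u : V2) (w : List V2) : List V2 :=
  w.take (w.length - (afterLast u w).length)

/-!
Cutting a stopped walk from `u` at its last visit to `u` is a bijection onto pairs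
(excursion from `u` back to `u` inside `D`, escape from `u` that never returns to `u`), and the
weight `4⁻ⁿ` is multiplicative under the cut. So the weight of any event `A(pre) ∧ B(suf)` is the
product `a_A * e_B` of an excursion factor depending only on `A` and an escape factor depending
only on `B`, and `(a_A e_B) (a e) = (a_A e) (a e_B)`.
-/

theorem List.exists_eq_append_cons_notMem_of_mem {α : Type*} {u : α} {w : List α} (h : u ∈ w) :
    ∃ s t, w = s ++ u :: t ∧ u ∉ t := by
  induction w using List.reverseRecOn with
  | nil => simp at h
  | append_singleton w x ih =>
    by_cases hx : x = u
    · exact ⟨w, [], by simp [hx], List.not_mem_nil⟩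
    · obtain ⟨s, t, rfl, hut⟩ := ih (by simpa [Ne.symm hx] using h)
      exact ⟨s, t ++ [x], by simp, by simp [hut, Ne.symm hx]⟩

lemma afterLast_append_cons {u : V2} (s : List V2) {t : List V2} (ht : u ∉ t) :
    afterLast u (s ++ u :: t) = t := by
  have hall : ∀ y ∈ t.reverse, decide (y ≠ u) = true := by
    intro y hy
    simpa using fun h : y = u => ht (h ▸ List.mem_reverse.mp hy)
  rw [afterLast, List.reverse_append, List.reverse_cons, List.append_assoc,
    List.takeWhile_append_of_pos hall]
  simp

lemma preLast_append_cons {u : V2} (s : List V2) {t : List V2} (ht : u ∉ t) :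
    preLast u (s ++ u :: t) = s ++ [u] := by
  rw [preLast, afterLast_append_cons s ht, List.append_cons s u t, List.length_append,
    Nat.add_sub_cancel, List.take_left]

lemma preLast_append_afterLast (u : V2) (w : List V2) :
    preLast u w ++ afterLast u w = w := by
  obtain ⟨r, hr⟩ : afterLast u w <:+ w :=
    List.reverse_prefix.mp (by simpa [afterLast] using List.takeWhile_prefix _)
  rw [preLast]
  generalize afterLast u w = a at hr ⊢
  subst hr
  simp

lemma wt_eq_ite (w : List V2) : wt w = if w.IsChain gadj then 4⁻¹ ^ (w.length - 1) else 0 :=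
  if_congr Iff.rfl rfl rfl

lemma wt_append_cons (s : List V2) (u : V2) (t : List V2) :
    wt (s ++ u :: t) = wt (s ++ [u]) * wt (u :: t) := by
  simp only [wt_eq_ite, List.isChain_split (l₂ := t)]
  split_ifs <;> simp_all [← pow_add]

-- Only `p.dropLast` has to lie in `D`: for `u ∉ D` the trivial walk `[u]` is then an excursion.
def IsExcursion (D : Finset V2) (u : V2) (p : List V2) : Prop :=
  p.head? = some u ∧ p.getLast? = some u ∧ ∀ x ∈ p.dropLast, x ∈ D

def IsEscape (D : Finset V2) (u : V2) (t : List V2) : Prop :=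
  IsStoppedWalk D u (u :: t) ∧ u ∉ t

section

variable {D : Finset V2} {u : V2}

lemma IsStoppedWalk.mem {w : List V2} (hw : IsStoppedWalk D u w) : u ∈ w :=
  List.mem_of_mem_head? hw.1

lemma IsExcursion.mem {p : List V2} (hp : IsExcursion D u p) : u ∈ p :=
  List.mem_of_mem_head? hp.1

lemma isStoppedWalk_append_cons_iff (s t : List V2) :
    IsStoppedWalk D u (s ++ u :: t) ↔
      IsExcursion D u (s ++ [u]) ∧ IsStoppedWalk D u (u :: t) := by
  have hhead : (s ++ u :: t).head? = (s ++ [u]).head? := by cases s <;> rfl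
  simp only [IsStoppedWalk, IsExcursion, hhead,
    List.dropLast_append_of_ne_nil (List.cons_ne_nil u t),
    List.getLast?_append_of_ne_nil _ (List.cons_ne_nil u t), List.dropLast_concat,
    List.getLast?_concat, List.head?_cons, List.mem_append, or_imp, forall_and]
  tauto

lemma isStoppedWalk_iff_isExcursion_and_isEscape (w : List V2) :
    IsStoppedWalk D u w ↔ IsExcursion D u (preLast u w) ∧ IsEscape D u (afterLast u w) := by
  by_cases hw : u ∈ w
  · obtain ⟨s, t, rfl, ht⟩ := List.exists_eq_append_cons_notMem_of_mem hw
    rw [preLast_append_cons s ht, afterLast_append_cons s ht, isStoppedWalk_append_cons_iff,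
      IsEscape, and_iff_left ht]
  · exact iff_of_false (mt IsStoppedWalk.mem hw)
      fun h => hw (List.mem_of_mem_take h.1.mem)

lemma wt_eq_wt_preLast_mul_wt_sufLast {w : List V2} (hw : u ∈ w) :
    wt w = wt (preLast u w) * wt (sufLast u w) := by
  obtain ⟨s, t, rfl, ht⟩ := List.exists_eq_append_cons_notMem_of_mem hw
  rw [preLast_append_cons s ht, sufLast, afterLast_append_cons s ht, wt_append_cons]

lemma ite_isStoppedWalk_eq_mul (A B : List V2 → Prop) [DecidablePred A] [DecidablePred B]
    (w : List V2) :
    (if IsStoppedWalk D u w ∧ A (preLast u w) ∧ B (sufLast u w) then wt w else 0) =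
      (if IsExcursion D u (preLast u w) ∧ A (preLast u w) then wt (preLast u w) else 0) *
        if IsEscape D u (afterLast u w) ∧ B (sufLast u w) then wt (sufLast u w) else 0 := by
  have hiff := isStoppedWalk_iff_isExcursion_and_isEscape (D := D) (u := u) w
  by_cases hw : IsStoppedWalk D u w
  · obtain ⟨hexc, hesc⟩ := hiff.1 hw
    rw [wt_eq_wt_preLast_mul_wt_sufLast hw.mem]
    by_cases hA : A (preLast u w) <;> by_cases hB : B (sufLast u w) <;>
      simp [hw, hexc, hesc, hA, hB]
  · rw [if_neg (by tauto)]
    split_ifs <;> simp_all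

end

theorem tsum_isStoppedWalk_eq_mul (D : Finset V2) (u : V2) (A B : List V2 → Prop)
    [DecidablePred A] [DecidablePred B] :
    (∑' w, if IsStoppedWalk D u w ∧ A (preLast u w) ∧ B (sufLast u w) then wt w else 0) =
      (∑' p, if IsExcursion D u p ∧ A p then wt p else 0) *
        ∑' t, if IsEscape D u t ∧ B (u :: t) then wt (u :: t) else 0 := by
  set F : List V2 × List V2 → ℝ≥0∞ := fun x =>
    (if IsExcursion D u x.1 ∧ A x.1 then wt x.1 else 0) *
      if IsEscape D u x.2 ∧ B (u :: x.2) then wt (u :: x.2) else 0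
  have hinj : Function.Injective fun w => (preLast u w, afterLast u w) := fun w w' h => by
    rw [← preLast_append_afterLast u w, ← preLast_append_afterLast u w']
    simp_all
  have hsupp : Function.support F ⊆ Set.range fun w => (preLast u w, afterLast u w) := by
    rintro ⟨p, t⟩ hF
    have hexc : IsExcursion D u p := by by_contra h; simp [F, h] at hF
    have hesc : IsEscape D u t := by by_contra h; simp [F, h] at hF
    obtain ⟨s, rfl⟩ : ∃ s, p = s ++ [u] := List.getLast?_eq_some_iff.mp hexc.2.1
    exact ⟨s ++ u :: t, by simp [preLast_append_cons s hesc.2, afterLast_append_cons s hesc.2]⟩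
  calc _ = ∑' w, F (preLast u w, afterLast u w) :=
        tsum_congr (ite_isStoppedWalk_eq_mul A B)
    _ = ∑' x, F x := hinj.tsum_eq hsupp
    _ = _ := by
      simp only [F, ENNReal.tsum_prod', ENNReal.tsum_mul_left, ENNReal.tsum_mul_right]

theorem independence_after_last_visit_general (D : Finset V2) (u₁ : V2)
    (p q : List V2) :
    (∑' w : List V2,
        if IsStoppedWalk D u₁ w ∧ preLast u₁ w = p ∧ sufLast u₁ w = q then wt w else 0)
        * (∑' w : List V2, if IsStoppedWalk D u₁ w then wt w else 0)
      = (∑' w : List V2, if IsStoppedWalk D u₁ w ∧ preLast u₁ w = p then wt w else 0)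
        * (∑' w : List V2, if IsStoppedWalk D u₁ w ∧ sufLast u₁ w = q then wt w else 0) := by
  have h := tsum_isStoppedWalk_eq_mul D u₁
  have hpq := h (· = p) (· = q)
  have hp := h (· = p) fun _ => True
  have hq := h (fun _ => True) (· = q)
  have hall := h (fun _ => True) fun _ => True
  simp only [and_true, true_and] at hpq hp hq hall
  rw [hpq, hp, hq, hall]
  ring

/-- **Independence after the last visit.** Let `X` be simple random walk on `ℤ²` started at
`u₁ ∈ D`, stopped on first exiting the finite domain `D`, and let `k` be the last time with
`X(k) = u₁`.  Then the path `(X(k+j))_{j ≥ 0}` after the last visit to `u₁` is independent of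
the initial segment `X[0,k]`: the joint law factorizes. -/
theorem independence_after_last_visit (D : Finset V2) (u₁ : V2) (hu : u₁ ∈ D)
    (p q : List V2) :
    (∑' w : List V2,
        if IsStoppedWalk D u₁ w ∧ preLast u₁ w = p ∧ sufLast u₁ w = q then wt w else 0)
        * (∑' w : List V2, if IsStoppedWalk D u₁ w then wt w else 0)
      = (∑' w : List V2, if IsStoppedWalk D u₁ w ∧ preLast u₁ w = p then wt w else 0)
        * (∑' w : List V2, if IsStoppedWalk D u₁ w ∧ sufLast u₁ w = q then wt w else 0) :=
  independence_after_last_visit_general D u₁ p q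
end

section
/- Suppose W^n, W are continuous functions from [0,∞) to ∂𝔻 with W^n → W locally uniformly. Let g^n_t, g_t be the corresponding solutions to the radial Loewner equation and f^n_t = (g^n_t)^{-1}, f_t = g_t^{-1}. Then f^n_t → f_t locally uniformly on [0,∞) × 𝔻. -/
/-! Run the Loewner flow backwards from `w ∈ 𝔻`: `ψ(s) = g_{t-s}(f_t(w))` solves
`ψ' = ψ (ψ + W(t-s)) / (ψ - W(t-s))` with `ψ(0) = w` and `ψ(t) = f_t(w)`. Along this reversed
flow `d/ds ‖ψ‖² = 2‖ψ‖² (‖ψ‖² - 1) / ‖ψ - W‖² ≤ 0` inside the disk, so `‖ψ‖ ≤ ‖w‖` throughout.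
On a closed disk of radius `r < 1` the vector field is Lipschitz both in `ψ` and in the driving
value, and Grönwall's inequality bounds `‖f_t(w) - fⁿ_t(w)‖` by `e^{4t/(1-r)²}` times the
supremum of `‖W - Wⁿ‖` on `[0,t]`, uniformly for `t ≤ T` and `‖w‖ ≤ r`. -/

open Set Filter Metric
open scoped Topology

/-- The point `z` survives the radial Loewner flow with driving function `W` up to time
`t`. -/
def RadialSurvives (W : ℝ → ℂ) (z : ℂ) (t : ℝ) : Prop :=
  ∃ g : ℝ → ℂ, g 0 = z ∧
    ∀ s ∈ Icc (0 : ℝ) t, g s ≠ W s ∧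
      HasDerivAt g (-(g s) * ((g s + W s) / (g s - W s))) s

/-- The radial Loewner hull at time `t`. -/
def radialHull (W : ℝ → ℂ) (t : ℝ) : Set ℂ :=
  {z : ℂ | ‖z‖ ≤ 1 ∧ ¬ RadialSurvives W z t}

/-- `g` is the radial Loewner flow associated with the driving function `W`: for every
point `z` of the closed disk not yet swallowed at time `t`, the curve `s ↦ g s z` solves
the radial Loewner ODE on `[0,t]` with initial value `z`. -/
def IsRadialLoewnerFlow (W : ℝ → ℂ) (g : ℝ → ℂ → ℂ) : Prop :=
  ∀ z : ℂ, ‖z‖ ≤ 1 → ∀ t : ℝ, 0 ≤ t → z ∉ radialHull W t →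
    g 0 z = z ∧
      ∀ s ∈ Icc (0 : ℝ) t, g s z ≠ W s ∧
        HasDerivAt (fun s' => g s' z) (-(g s z) * ((g s z + W s) / (g s z - W s))) s

/-- `f` is the inverse of the radial Loewner flow `g`: for each `t ≥ 0`,
`f t : 𝔻 → 𝔻 \ K_t` is a right inverse of `g t`. -/
def IsLoewnerInverse (W : ℝ → ℂ) (g : ℝ → ℂ → ℂ) (f : ℝ → ℂ → ℂ) : Prop :=
  ∀ t : ℝ, 0 ≤ t → ∀ w : ℂ, ‖w‖ < 1 →
    ‖f t w‖ ≤ 1 ∧ f t w ∉ radialHull W t ∧ g t (f t w) = w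

noncomputable def loewnerField (a x : ℂ) : ℂ := x * ((x + a) / (x - a))

theorem one_sub_le_norm_sub {a x : ℂ} {r : ℝ} (ha : ‖a‖ = 1) (hx : ‖x‖ ≤ r) :
    1 - r ≤ ‖x - a‖ := by
  have := norm_sub_norm_le a x
  rw [norm_sub_rev] at this
  linarith

theorem inner_loewnerField (a x : ℂ) :
    inner ℝ x (loewnerField a x) = ‖x‖ ^ 2 * (‖x‖ ^ 2 - ‖a‖ ^ 2) / ‖x - a‖ ^ 2 := by
  rcases eq_or_ne x a with rfl | hxa
  · simp [loewnerField]
  simp only [Complex.inner, loewnerField, ← Complex.normSq_eq_norm_sq, Complex.normSq_apply,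
    Complex.mul_re, Complex.mul_im, Complex.div_re, Complex.div_im, Complex.add_re,
    Complex.add_im, Complex.sub_re, Complex.sub_im, Complex.conj_re, Complex.conj_im]
  field_simp
  ring

theorem inner_loewnerField_neg {a x : ℂ} (ha : ‖a‖ = 1) (hx₀ : x ≠ 0) (hx₁ : ‖x‖ < 1) :
    inner ℝ x (loewnerField a x) < 0 := by
  have hxa : 0 < ‖x - a‖ := norm_pos_iff.mpr (sub_ne_zero.mpr (by rintro rfl; linarith))
  rw [inner_loewnerField, ha]
  have := norm_pos_iff.mpr hx₀
  apply div_neg_of_neg_of_pos _ (by positivity)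
  exact mul_neg_of_pos_of_neg (by positivity) (by nlinarith)

theorem lipschitzOnWith_loewnerField {a : ℂ} {r : ℝ} (ha : ‖a‖ = 1) (hr : r < 1) :
    LipschitzOnWith (4 / (1 - r) ^ 2).toNNReal (loewnerField a) (closedBall 0 r) := by
  refine LipschitzOnWith.of_dist_le_mul fun x hx y hy => ?_
  rw [mem_closedBall_zero_iff] at hx hy
  have hxa := one_sub_le_norm_sub ha hx
  have hya := one_sub_le_norm_sub ha hy
  have h1r : 0 < 1 - r := by linarith
  have hdiff : loewnerField a x - loewnerField a y
      = (x - y) * (x * y - a * (x + y) - a ^ 2) / ((x - a) * (y - a)) := by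
    have : x - a ≠ 0 := norm_pos_iff.mp (by linarith)
    have : y - a ≠ 0 := norm_pos_iff.mp (by linarith)
    simp only [loewnerField]
    field_simp
    ring
  have hnum : ‖x * y - a * (x + y) - a ^ 2‖ ≤ 4 := by
    calc ‖x * y - a * (x + y) - a ^ 2‖ ≤ ‖x‖ * ‖y‖ + (‖x‖ + ‖y‖) + 1 := by
          refine (norm_sub_le _ _).trans (add_le_add ((norm_sub_le _ _).trans ?_) ?_)
          · simp only [norm_mul, ha, one_mul]
            exact add_le_add le_rfl (norm_add_le x y)
          · simp [ha]
      _ ≤ 4 := by nlinarith [norm_nonneg x, norm_nonneg y]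
  rw [Real.coe_toNNReal _ (by positivity), dist_eq_norm, dist_eq_norm, hdiff, norm_div,
    norm_mul, norm_mul]
  calc ‖x - y‖ * ‖x * y - a * (x + y) - a ^ 2‖ / (‖x - a‖ * ‖y - a‖)
      ≤ ‖x - y‖ * 4 / ((1 - r) * (1 - r)) := by gcongr
    _ = 4 / (1 - r) ^ 2 * ‖x - y‖ := by ring

theorem norm_loewnerField_sub_le {a b x : ℂ} {r : ℝ} (ha : ‖a‖ = 1) (hb : ‖b‖ = 1)
    (hr : r < 1) (hx : ‖x‖ ≤ r) :
    ‖loewnerField a x - loewnerField b x‖ ≤ 2 / (1 - r) ^ 2 * ‖a - b‖ := by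
  have hxa := one_sub_le_norm_sub ha hx
  have hxb := one_sub_le_norm_sub hb hx
  have h1r : 0 < 1 - r := by linarith
  have hdiff : loewnerField a x - loewnerField b x = 2 * x ^ 2 * (a - b) / ((x - a) * (x - b)) := by
    have : x - a ≠ 0 := norm_pos_iff.mp (by linarith)
    have : x - b ≠ 0 := norm_pos_iff.mp (by linarith)
    simp only [loewnerField]
    field_simp
    ring
  have hx2 : ‖x‖ ^ 2 ≤ 1 := by nlinarith [norm_nonneg x]
  rw [hdiff, norm_div, norm_mul, norm_mul, norm_mul, norm_pow, Complex.norm_two]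
  calc 2 * ‖x‖ ^ 2 * ‖a - b‖ / (‖x - a‖ * ‖x - b‖)
      ≤ 2 * 1 * ‖a - b‖ / ((1 - r) * (1 - r)) := by gcongr
    _ = 2 / (1 - r) ^ 2 * ‖a - b‖ := by ring

theorem norm_le_of_hasDerivWithinAt_loewnerField {V ψ : ℝ → ℂ} {a b : ℝ}
    (hV : ∀ s ∈ Ico a b, ‖V s‖ = 1) (hψ : ContinuousOn ψ (Icc a b))
    (hψ' : ∀ s ∈ Ico a b, HasDerivWithinAt ψ (loewnerField (V s) (ψ s)) (Ici s) s)
    (ha : ‖ψ a‖ < 1) : ∀ s ∈ Icc a b, ‖ψ s‖ ≤ ‖ψ a‖ := by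
  -- `‖ψ‖²` cannot cross any level `β ∈ (‖ψ a‖², 1)` upwards, since its derivative is negative there.
  have below : ∀ β, ‖ψ a‖ ^ 2 < β → β < 1 → ∀ s ∈ Icc a b, ‖ψ s‖ ^ 2 ≤ β := by
    intro β hβ₀ hβ₁
    refine image_le_of_deriv_right_lt_deriv_boundary (hψ.norm.pow 2)
      (fun s hs => (hψ' s hs).norm_sq) hβ₀.le (fun _ => hasDerivAt_const _ β) ?_
    intro s hs (hsβ : ‖ψ s‖ ^ 2 = β)
    have hs₀ : ψ s ≠ 0 := by
      rintro h
      rw [h, norm_zero] at hsβ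
      nlinarith [norm_nonneg (ψ a)]
    have hs₁ : ‖ψ s‖ < 1 := by nlinarith [norm_nonneg (ψ s)]
    linarith [inner_loewnerField_neg (hV s hs) hs₀ hs₁]
  intro s hs
  by_contra! h
  obtain ⟨β, hβ₀, hβ₁⟩ : ∃ β, ‖ψ a‖ ^ 2 < β ∧ β < min (‖ψ s‖ ^ 2) 1 :=
    exists_between (lt_min (by gcongr) (by nlinarith [norm_nonneg (ψ a)]))
  have := below β hβ₀ (hβ₁.trans_le (min_le_right _ _)) s hs
  linarith [hβ₁.trans_le (min_le_left _ _)]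

theorem dist_le_of_hasDerivAt_loewnerField {V₁ V₂ ψ₁ ψ₂ : ℝ → ℂ} {T r η : ℝ}
    (hV₁ : ∀ s, ‖V₁ s‖ = 1) (hV₂ : ∀ s, ‖V₂ s‖ = 1) (hT : 0 ≤ T) (hr : r < 1)
    (hψ₁ : ∀ s ∈ Icc 0 T, HasDerivAt ψ₁ (loewnerField (V₁ s) (ψ₁ s)) s)
    (hψ₂ : ∀ s ∈ Icc 0 T, HasDerivAt ψ₂ (loewnerField (V₂ s) (ψ₂ s)) s)
    (h₀ : ψ₁ 0 = ψ₂ 0) (hr₀ : ‖ψ₁ 0‖ ≤ r) (hη : ∀ s ∈ Icc 0 T, dist (V₁ s) (V₂ s) ≤ η) :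
    dist (ψ₁ T) (ψ₂ T) ≤ η * Real.exp (4 / (1 - r) ^ 2 * T) := by
  have cont {V ψ : ℝ → ℂ} (h : ∀ s ∈ Icc 0 T, HasDerivAt ψ (loewnerField (V s) (ψ s)) s) :
      ContinuousOn ψ (Icc 0 T) := fun s hs => (h s hs).continuousAt.continuousWithinAt
  have deriv {V ψ : ℝ → ℂ} (h : ∀ s ∈ Icc 0 T, HasDerivAt ψ (loewnerField (V s) (ψ s)) s) :
      ∀ s ∈ Ico 0 T, HasDerivWithinAt ψ (loewnerField (V s) (ψ s)) (Ici s) s :=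
    fun s hs => (h s (Ico_subset_Icc_self hs)).hasDerivWithinAt
  have mem {V ψ : ℝ → ℂ} (hV : ∀ s, ‖V s‖ = 1)
      (h : ∀ s ∈ Icc 0 T, HasDerivAt ψ (loewnerField (V s) (ψ s)) s) (h₀ : ‖ψ 0‖ ≤ r) :
      ∀ s ∈ Ico 0 T, ψ s ∈ closedBall 0 r := fun s hs =>
    mem_closedBall_zero_iff.mpr <| (norm_le_of_hasDerivWithinAt_loewnerField (fun s _ => hV s)
      (cont h) (deriv h) (h₀.trans_lt hr) s (Ico_subset_Icc_self hs)).trans h₀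
  have hη₀ : 0 ≤ η := dist_nonneg.trans (hη 0 ⟨le_rfl, hT⟩)
  have hψ₂r := mem hV₂ hψ₂ (h₀ ▸ hr₀)
  have perturb : ∀ s ∈ Ico 0 T,
      dist (loewnerField (V₂ s) (ψ₂ s)) (loewnerField (V₁ s) (ψ₂ s)) ≤ 2 / (1 - r) ^ 2 * η :=
    fun s hs => by
      rw [dist_eq_norm]
      refine (norm_loewnerField_sub_le (hV₂ s) (hV₁ s) hr
        (mem_closedBall_zero_iff.mp (hψ₂r s hs))).trans ?_
      rw [← dist_eq_norm, dist_comm]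
      gcongr
      exact hη s (Ico_subset_Icc_self hs)
  have gronwall := dist_le_of_approx_trajectories_ODE_of_mem
    (fun s _ => lipschitzOnWith_loewnerField (hV₁ s) hr) (cont hψ₁) (deriv hψ₁)
    (fun s _ => (dist_self _).le) (mem hV₁ hψ₁ hr₀) (cont hψ₂) (deriv hψ₂) perturb hψ₂r
    (by rw [h₀, dist_self]) T ⟨hT, le_rfl⟩
  rw [gronwallBound_of_K_ne_0 (by rw [Real.coe_toNNReal _ (by positivity)]; positivity),
    Real.coe_toNNReal _ (by positivity), sub_zero] at gronwall
  have hcoef : 2 / (1 - r) ^ 2 * η / (4 / (1 - r) ^ 2) = η / 2 := by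
    have : 1 - r ≠ 0 := by linarith
    field_simp
    ring
  simp only [zero_mul, zero_add, hcoef] at gronwall
  have : 1 ≤ Real.exp (4 / (1 - r) ^ 2 * T) := Real.one_le_exp (by positivity)
  nlinarith

theorem IsLoewnerInverse.exists_reverse_trajectory {W : ℝ → ℂ} {g f : ℝ → ℂ → ℂ}
    (hg : IsRadialLoewnerFlow W g) (hf : IsLoewnerInverse W g f) {t : ℝ} (ht : 0 ≤ t) {w : ℂ}
    (hw : ‖w‖ < 1) :
    ∃ ψ : ℝ → ℂ, ψ 0 = w ∧ ψ t = f t w ∧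
      ∀ s ∈ Icc 0 t, HasDerivAt ψ (loewnerField (W (t - s)) (ψ s)) s := by
  obtain ⟨hz, hzK, hgz⟩ := hf t ht w hw
  obtain ⟨hg₀, hode⟩ := hg (f t w) hz t ht hzK
  refine ⟨fun s => g (t - s) (f t w), by simpa using hgz, by simpa using hg₀, fun s hs => ?_⟩
  have hts : t - s ∈ Icc 0 t := ⟨by linarith [hs.2], by linarith [hs.1]⟩
  have := (hode (t - s) hts).2.scomp s ((hasDerivAt_id s).const_sub t)
  simpa [loewnerField, Function.comp_def] using this

theorem IsLoewnerInverse.dist_le {W₁ W₂ : ℝ → ℂ} {g₁ g₂ f₁ f₂ : ℝ → ℂ → ℂ}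
    (hW₁ : ∀ s, ‖W₁ s‖ = 1) (hW₂ : ∀ s, ‖W₂ s‖ = 1)
    (hg₁ : IsRadialLoewnerFlow W₁ g₁) (hg₂ : IsRadialLoewnerFlow W₂ g₂)
    (hf₁ : IsLoewnerInverse W₁ g₁ f₁) (hf₂ : IsLoewnerInverse W₂ g₂ f₂)
    {t r η : ℝ} {w : ℂ} (ht : 0 ≤ t) (hr : r < 1) (hw : ‖w‖ ≤ r)
    (hη : ∀ s ∈ Icc 0 t, dist (W₁ s) (W₂ s) ≤ η) :
    dist (f₁ t w) (f₂ t w) ≤ η * Real.exp (4 / (1 - r) ^ 2 * t) := by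
  obtain ⟨ψ₁, hψ₁0, hψ₁t, hψ₁⟩ := hf₁.exists_reverse_trajectory hg₁ ht (hw.trans_lt hr)
  obtain ⟨ψ₂, hψ₂0, hψ₂t, hψ₂⟩ := hf₂.exists_reverse_trajectory hg₂ ht (hw.trans_lt hr)
  rw [← hψ₁t, ← hψ₂t]
  refine dist_le_of_hasDerivAt_loewnerField (fun s => hW₁ (t - s)) (fun s => hW₂ (t - s)) ht hr
    hψ₁ hψ₂ (hψ₁0.trans hψ₂0.symm) (hψ₁0 ▸ hw) fun s hs => hη (t - s) ?_
  exact ⟨by linarith [hs.2], by linarith [hs.1]⟩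

theorem loewner_inverse_continuity_general
    (Wn : ℕ → ℝ → ℂ) (W : ℝ → ℂ)
    (hWnCirc : ∀ n s, ‖Wn n s‖ = 1) (hWCirc : ∀ s, ‖W s‖ = 1)
    (hconv : TendstoLocallyUniformlyOn (fun n => Wn n) W atTop (Ici (0 : ℝ)))
    (gn : ℕ → ℝ → ℂ → ℂ) (g : ℝ → ℂ → ℂ) (fn : ℕ → ℝ → ℂ → ℂ) (f : ℝ → ℂ → ℂ)
    (hgn : ∀ n, IsRadialLoewnerFlow (Wn n) (gn n))
    (hg : IsRadialLoewnerFlow W g)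
    (hfn : ∀ n, IsLoewnerInverse (Wn n) (gn n) (fn n))
    (hf : IsLoewnerInverse W g f) :
    TendstoLocallyUniformlyOn (fun n (p : ℝ × ℂ) => fn n p.1 p.2)
      (fun p => f p.1 p.2) atTop (Ici (0 : ℝ) ×ˢ Metric.ball (0 : ℂ) 1) := by
  rw [Metric.tendstoLocallyUniformlyOn_iff]
  rintro ε hε ⟨t₀, w₀⟩ ⟨-, hw₀ : w₀ ∈ ball 0 1⟩
  rw [mem_ball_zero_iff] at hw₀
  obtain ⟨r, hw₀r, hr⟩ := exists_between hw₀
  obtain ⟨T, hT⟩ := exists_gt t₀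
  have hE : 0 < Real.exp (4 / (1 - r) ^ 2 * T) := Real.exp_pos _
  set η := ε / (2 * Real.exp (4 / (1 - r) ^ 2 * T))
  have hconvT : TendstoUniformlyOn (fun n => Wn n) W atTop (Icc 0 T) :=
    (tendstoLocallyUniformlyOn_iff_tendstoUniformlyOn_of_compact isCompact_Icc).mp
      (hconv.mono Icc_subset_Ici_self)
  refine ⟨_, inter_mem_nhdsWithin _ <| (isOpen_Iio.prod isOpen_ball).mem_nhds
    ⟨hT, mem_ball_zero_iff.mpr hw₀r⟩, ?_⟩
  filter_upwards [Metric.tendstoUniformlyOn_iff.mp hconvT η (by positivity)] with n hn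
  rintro ⟨t, w⟩ ⟨⟨ht : 0 ≤ t, -⟩, htT : t < T, hw : w ∈ ball 0 r⟩
  rw [mem_ball_zero_iff] at hw
  calc dist (f t w) (fn n t w) ≤ η * Real.exp (4 / (1 - r) ^ 2 * t) :=
        hf.dist_le hWCirc (hWnCirc n) hg (hgn n) (hfn n) ht hr hw.le
          fun s hs => (hn s ⟨hs.1, hs.2.trans htT.le⟩).le
    _ ≤ η * Real.exp (4 / (1 - r) ^ 2 * T) := by gcongr
    _ = ε / 2 := by
        simp only [η]
        field_simp
    _ < ε := half_lt_self hε

/-- **Continuity of the Loewner flow in the driving function.**  If the continuous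
circle-valued driving functions `Wⁿ` converge locally uniformly to `W`, then the inverse
maps `fⁿ_t = (gⁿ_t)⁻¹` converge to `f_t = g_t⁻¹` locally uniformly on
`[0,∞) × 𝔻`. -/
theorem loewner_inverse_continuity
    (Wn : ℕ → ℝ → ℂ) (W : ℝ → ℂ)
    (hWnCont : ∀ n, Continuous (Wn n)) (hWCont : Continuous W)
    (hWnCirc : ∀ n s, ‖Wn n s‖ = 1) (hWCirc : ∀ s, ‖W s‖ = 1)
    (hconv : TendstoLocallyUniformlyOn (fun n => Wn n) W atTop (Ici (0 : ℝ)))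
    (gn : ℕ → ℝ → ℂ → ℂ) (g : ℝ → ℂ → ℂ) (fn : ℕ → ℝ → ℂ → ℂ) (f : ℝ → ℂ → ℂ)
    (hgn : ∀ n, IsRadialLoewnerFlow (Wn n) (gn n))
    (hg : IsRadialLoewnerFlow W g)
    (hfn : ∀ n, IsLoewnerInverse (Wn n) (gn n) (fn n))
    (hf : IsLoewnerInverse W g f) :
    TendstoLocallyUniformlyOn (fun n (p : ℝ × ℂ) => fn n p.1 p.2)
      (fun p => f p.1 p.2) atTop (Ici (0 : ℝ) ×ˢ Metric.ball (0 : ℂ) 1) :=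
  loewner_inverse_continuity_general Wn W hWnCirc hWCirc hconv gn g fn f hgn hg hfn hf
end

section
/- Let β_n, β : [0,1] → closure(𝔻) \ {0} be curves with β_n[0,1] converging to β[0,1] in the Hausdorff metric (in particular, if ρ(β_n, β) → 0). Then the capacity of β_n[0,1] from 0 tends to the capacity of β[0,1] from 0, where the capacity of a compact K ⊂ closure(𝔻) with 0 in the domain component is log ψ'(0) for ψ the conformal map of the component of 0 in 𝔻 \ K onto 𝔻 fixing 0 with positive derivative. -/
open Set Filter Metric
open scoped Topology unitInterval

/-- `ψ` is the normalized conformal map of the component of `0` in `𝔻 \ K` onto `𝔻`,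
with derivative `d > 0` at `0`; `log d` is the capacity of `closure 𝔻 \ D` from `0`. -/
def IsCapacityMap (K : Set ℂ) (ψ : ℂ → ℂ) (d : ℝ) : Prop :=
  0 < d ∧ ψ 0 = 0 ∧ HasDerivAt ψ (d : ℂ) 0 ∧
    DifferentiableOn ℂ ψ (connectedComponentIn (Metric.ball (0 : ℂ) 1 \ K) 0) ∧
    InjOn ψ (connectedComponentIn (Metric.ball (0 : ℂ) 1 \ K) 0) ∧
    ψ '' connectedComponentIn (Metric.ball (0 : ℂ) 1 \ K) 0 = Metric.ball (0 : ℂ) 1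

/-!
Let `φ = ψ⁻¹ : 𝔻 → D` and `φₙ = ψₙ⁻¹`, so that `φₙ'(0) = 1 / dₙ`. For `r < 1` the compact
connected set `φ(r 𝔻̄)` avoids `K`, hence eventually avoids `Kₙ`, and Schwarz's lemma for
`ψₙ ∘ φ(r ·)` gives `dₙ r ≤ d` for large `n`. Conversely, by Montel's theorem every subsequence
of `(φₙ)` has a further subsequence converging locally uniformly to some `f` with
`|f'(0)| ≥ 1 / d`; by Hurwitz's theorem and the maximum principle `f` maps `𝔻` into `D`, and
Schwarz's lemma for `ψ ∘ f` gives `|f'(0)| ≤ 1 / d`. Hence `dₙ → d`.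
-/

local notation "𝒟" K:max => connectedComponentIn (ball (0 : ℂ) 1 \ K) 0

theorem IsCapacityMap.zero_mem {K : Set ℂ} {ψ : ℂ → ℂ} {d : ℝ} (h : IsCapacityMap K ψ d) :
    (0 : ℂ) ∈ ball (0 : ℂ) 1 \ K := by
  have himage : (ψ '' 𝒟 K).Nonempty := by
    rw [h.2.2.2.2.2]
    exact ⟨0, mem_ball_self one_pos⟩
  exact connectedComponentIn_nonempty_iff.mp himage.of_image

theorem AnalyticOnNhd.countable_setOf_eq_zero {E : Type*} [NormedAddCommGroup E]
    [NormedSpace ℂ E] {g : ℂ → E} {U : Set ℂ} (hg : AnalyticOnNhd ℂ g U) (hU : IsPreconnected U)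
    {z₀ : ℂ} (hz₀ : z₀ ∈ U) (hne : g z₀ ≠ 0) : {z ∈ U | g z = 0}.Countable := by
  refine (HereditarilyLindelofSpace.isLindelof _).countable_of_isDiscrete
    (IsDiscrete.of_nhdsWithin fun z ⟨hzU, hz⟩ => ?_)
  rcases (hg z hzU).eventually_eq_zero_or_eventually_ne_zero with h | h
  · exact absurd (hg.eqOn_zero_of_preconnected_of_eventuallyEq_zero hU hzU h hz₀) hne
  · rw [le_pure_iff, mem_nhdsWithin_iff_eventually]
    filter_upwards [eventually_nhdsWithin_iff.mp h] with y hy ⟨_, hy0⟩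
    by_contra hyz
    exact hy hyz hy0

theorem Set.InjOn.continuousOn_invFunOn {X Y : Type*} [TopologicalSpace X] [TopologicalSpace Y]
    [Nonempty X] {f : X → Y} {s : Set X} (hinj : InjOn f s)
    (hf : ∀ t ⊆ s, IsOpen t → IsOpen (f '' t)) (hs : IsOpen s) :
    ContinuousOn (Function.invFunOn f s) (f '' s) := by
  refine continuousOn_iff'.mpr fun (O : Set X) hO =>
    ⟨f '' (O ∩ s), hf _ inter_subset_right (hO.inter hs), ?_⟩
  ext y
  constructor
  · rintro ⟨hyO, x, hx, rfl⟩
    rw [mem_preimage, hinj.leftInvOn_invFunOn hx] at hyO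
    exact ⟨⟨x, ⟨hyO, hx⟩, rfl⟩, x, hx, rfl⟩
  · rintro ⟨⟨x, ⟨hxO, hx⟩, rfl⟩, hy⟩
    exact ⟨by rwa [mem_preimage, hinj.leftInvOn_invFunOn hx], hy⟩

theorem differentiableOn_of_differentiableAt_off_countable {E : Type*} [NormedAddCommGroup E]
    [NormedSpace ℂ E] [CompleteSpace E] {f : ℂ → E} {U s : Set ℂ} (hU : IsOpen U)
    (hs : s.Countable) (hc : ContinuousOn f U) (hd : ∀ z ∈ U \ s, DifferentiableAt ℂ f z) :
    DifferentiableOn ℂ f U := by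
  intro w hw
  obtain ⟨R, hR, hRU⟩ := nhds_basis_closedBall.mem_iff.mp (hU.mem_nhds hw)
  lift R to NNReal using hR.le
  exact (Complex.hasFPowerSeriesOnBall_of_differentiable_off_countable hs (hc.mono hRU)
    (fun z hz => hd z ⟨hRU (ball_subset_closedBall hz.1), hz.2⟩) hR).analyticAt
    |>.differentiableAt.differentiableWithinAt

theorem IsCapacityMap.exists_rightInverse {K : Set ℂ} {ψ : ℂ → ℂ} {d : ℝ} (hK : IsClosed K)
    (h : IsCapacityMap K ψ d) :
    ∃ φ : ℂ → ℂ, DifferentiableOn ℂ φ (ball 0 1) ∧ φ 0 = 0 ∧ HasDerivAt φ (d : ℂ)⁻¹ 0 ∧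
      MapsTo φ (ball 0 1) (𝒟 K) ∧ ∀ w ∈ ball (0 : ℂ) 1, ψ (φ w) = w := by
  have hD0 : (0 : ℂ) ∈ 𝒟 K := mem_connectedComponentIn h.zero_mem
  obtain ⟨hd, hψ0, hψ', hψd, hψinj, hψim⟩ := h
  have hD : IsOpen (𝒟 K) := (isOpen_ball.sdiff hK).connectedComponentIn
  have hψan : AnalyticOnNhd ℂ ψ (𝒟 K) := hψd.analyticOnNhd hD
  have hψ'0 : deriv ψ 0 ≠ 0 := by
    rw [hψ'.deriv]
    exact_mod_cast hd.ne'
  have hopen : ∀ s ⊆ 𝒟 K, IsOpen s → IsOpen (ψ '' s) := by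
    refine (hψan.is_constant_or_isOpen isPreconnected_connectedComponentIn).resolve_left ?_
    rintro ⟨w, hw⟩
    have hconst : ψ =ᶠ[𝓝 0] fun _ => w := eventually_of_mem (hD.mem_nhds hD0) hw
    exact hψ'0 (hconst.deriv_eq.trans (deriv_const _ _))
  set φ := Function.invFunOn ψ (𝒟 K)
  have hφ : ∀ w ∈ ball (0 : ℂ) 1, φ w ∈ 𝒟 K ∧ ψ (φ w) = w := by
    intro w hw
    rw [← hψim] at hw
    obtain ⟨z, hz, rfl⟩ := hw
    have hφψ : φ (ψ z) = z := hψinj.leftInvOn_invFunOn hz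
    rw [hφψ]
    exact ⟨hz, rfl⟩
  have hφc : ContinuousOn φ (ball 0 1) := by
    simpa only [hψim] using hψinj.continuousOn_invFunOn hopen hD
  have hφ' : ∀ w ∈ ball (0 : ℂ) 1, deriv ψ (φ w) ≠ 0 → HasDerivAt φ (deriv ψ (φ w))⁻¹ w :=
    fun w hw hw' => .of_local_left_inverse (hφc.continuousAt (isOpen_ball.mem_nhds hw))
      (hψd.differentiableAt (hD.mem_nhds (hφ w hw).1)).hasDerivAt hw'
      (eventually_of_mem (isOpen_ball.mem_nhds hw) fun y hy => (hφ y hy).2)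
  have hφ0 : φ 0 = 0 := by
    simpa [hψ0] using hψinj.leftInvOn_invFunOn hD0
  -- `φ` is differentiable wherever `ψ' ∘ φ ≠ 0`, i.e. off the countable set of critical values
  -- of `ψ`; being continuous, it is then holomorphic.
  have hcrit : (ψ '' {z ∈ 𝒟 K | deriv ψ z = 0}).Countable :=
    (hψan.deriv.countable_setOf_eq_zero isPreconnected_connectedComponentIn hD0 hψ'0).image ψ
  refine ⟨φ, ?_, hφ0, ?_, fun w hw => (hφ w hw).1, fun w hw => (hφ w hw).2⟩
  · refine differentiableOn_of_differentiableAt_off_countable isOpen_ball hcrit hφc ?_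
    rintro w ⟨hw, hwcrit⟩
    exact (hφ' w hw fun h0 => hwcrit ⟨φ w, ⟨(hφ w hw).1, h0⟩, (hφ w hw).2⟩).differentiableAt
  · simpa [hφ0, hψ'.deriv] using hφ' 0 (mem_ball_self one_pos) (by rwa [hφ0])

theorem IsCapacityMap.mul_norm_le_one {K : Set ℂ} {ψ : ℂ → ℂ} {d : ℝ} (h : IsCapacityMap K ψ d)
    {f : ℂ → ℂ} {c : ℂ} (hf : DifferentiableOn ℂ f (ball 0 1)) (hf0 : f 0 = 0)
    (hc : HasDerivAt f c 0) (hmaps : MapsTo f (ball 0 1) (𝒟 K)) : d * ‖c‖ ≤ 1 := by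
  obtain ⟨hd, hψ0, hψ', hψd, -, hψim⟩ := h
  have hmaps' : MapsTo (ψ ∘ f) (ball 0 1) (closedBall ((ψ ∘ f) 0) 1) := by
    rw [Function.comp_apply, hf0, hψ0]
    exact fun z hz => ball_subset_closedBall (hψim ▸ mem_image_of_mem ψ (hmaps hz))
  have hψf0 : HasDerivAt ψ d (f 0) := by rwa [hf0]
  have hψf' : HasDerivAt (ψ ∘ f) (d * c) 0 := hψf0.comp 0 hc
  have := Complex.norm_deriv_le_one_of_mapsTo_ball (hψd.comp hf hmaps) hmaps' one_pos
  rwa [hψf'.deriv, norm_mul, Complex.norm_real, Real.norm_of_nonneg hd.le] at this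

open Nat in
theorem norm_iteratedDeriv_le_of_forall_mem_ball_norm_le {E : Type*} [NormedAddCommGroup E]
    [NormedSpace ℂ E] [CompleteSpace E] {F : ℂ → E} {c : ℂ} {R M : ℝ} (k : ℕ) (hR : 0 < R)
    (hF : DifferentiableOn ℂ F (ball c R)) (hM : ∀ z ∈ ball c R, ‖F z‖ ≤ M) :
    ‖iteratedDeriv k F c‖ ≤ k ! * M / R ^ k := by
  have hcauchy : ∀ r ∈ Ioo 0 R, ‖iteratedDeriv k F c‖ ≤ k ! * M / r ^ k := fun r ⟨hr0, hrR⟩ =>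
    Complex.norm_iteratedDeriv_le_of_forall_mem_sphere_norm_le k hr0
      (hF.diffContOnCl_ball (closedBall_subset_ball hrR))
      fun z hz => hM z (closedBall_subset_ball hrR (sphere_subset_closedBall hz))
  have hlim : Tendsto (fun r : ℝ => k ! * M / r ^ k) (𝓝[<] R) (𝓝 (k ! * M / R ^ k)) :=
    ((continuousAt_const.div (continuousAt_id.pow k) (pow_ne_zero k hR.ne')).tendsto).mono_left
      nhdsWithin_le_nhds
  exact ge_of_tendsto hlim (eventually_of_mem (Ioo_mem_nhdsLT hR) hcauchy)

theorem exists_strictMono_forall_tendsto_of_norm_le {E : Type*} [NormedAddCommGroup E]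
    [ProperSpace E] {a : ℕ → ℕ → E} {M : ℝ} (ha : ∀ m k, ‖a m k‖ ≤ M) :
    ∃ A : ℕ → E, (∀ k, ‖A k‖ ≤ M) ∧ ∃ t : ℕ → ℕ, StrictMono t ∧
      ∀ k, Tendsto (fun m => a (t m) k) atTop (𝓝 (A k)) := by
  obtain ⟨A, hA, t, ht, hlim⟩ :=
    (isCompact_univ_pi fun _ : ℕ => isCompact_closedBall (0 : E) M).tendsto_subseq
      (x := a) fun m k _ => mem_closedBall_zero_iff.mpr (ha m k)
  exact ⟨A, fun k => mem_closedBall_zero_iff.mp (hA k trivial), t, ht, tendsto_pi_nhds.mp hlim⟩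

theorem tendstoUniformlyOn_closedBall_of_tendsto_coeff {a : ℕ → ℕ → ℂ} {A : ℕ → ℂ}
    {F : ℕ → ℂ → ℂ} {f : ℂ → ℂ} {M r : ℝ} (hr0 : 0 ≤ r) (hr1 : r < 1)
    (ha : ∀ m k, ‖a m k‖ ≤ M) (hAM : ∀ k, ‖A k‖ ≤ M)
    (hA : ∀ k, Tendsto (fun m => a m k) atTop (𝓝 (A k)))
    (hF : ∀ m, ∀ z ∈ closedBall (0 : ℂ) r, HasSum (fun k => a m k * z ^ k) (F m z))
    (hf : ∀ z ∈ closedBall (0 : ℂ) r, HasSum (fun k => A k * z ^ k) (f z)) :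
    TendstoUniformlyOn F f atTop (closedBall 0 r) := by
  have hgeom : Summable fun k => 2 * M * r ^ k :=
    (summable_geometric_of_lt_one hr0 hr1).mul_left _
  have hbound : ∀ m k, ‖‖A k - a m k‖ * r ^ k‖ ≤ 2 * M * r ^ k := by
    intro m k
    rw [Real.norm_of_nonneg (by positivity), two_mul]
    gcongr
    exact norm_sub_le_of_le (hAM k) (ha m k)
  have htail : Tendsto (fun m => ∑' k, ‖A k - a m k‖ * r ^ k) atTop (𝓝 0) := by
    simpa using tendsto_tsum_of_dominated_convergence hgeom
      (fun k => ((tendsto_const_nhds.sub (hA k)).norm.mul_const (r ^ k)))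
      (Eventually.of_forall hbound)
  rw [Metric.tendstoUniformlyOn_iff]
  intro ε hε
  filter_upwards [htail.eventually (gt_mem_nhds hε)] with m hm z hz
  have hzr : ‖z‖ ≤ r := mem_closedBall_zero_iff.mp hz
  calc dist (f z) (F m z) = ‖∑' k, (A k - a m k) * z ^ k‖ := by
        simp_rw [dist_eq_norm, sub_mul, ((hf z hz).sub (hF m z hz)).tsum_eq]
    _ ≤ ∑' k, ‖A k - a m k‖ * r ^ k := by
        refine tsum_of_norm_bounded (hgeom.of_norm_bounded (hbound m)).hasSum fun k => ?_
        rw [norm_mul, norm_pow]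
        gcongr
    _ < ε := hm

-- Montel's theorem
open Nat in
theorem exists_strictMono_tendstoLocallyUniformlyOn_ball {F : ℕ → ℂ → ℂ} {M : ℝ}
    (hF : ∀ n, DifferentiableOn ℂ (F n) (ball 0 1))
    (hM : ∀ n, ∀ z ∈ ball (0 : ℂ) 1, ‖F n z‖ ≤ M) :
    ∃ (f : ℂ → ℂ) (t : ℕ → ℕ), StrictMono t ∧
      TendstoLocallyUniformlyOn (fun m => F (t m)) f atTop (ball 0 1) := by
  set a : ℕ → ℕ → ℂ := fun n k => (k ! : ℂ)⁻¹ * iteratedDeriv k (F n) 0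
  have ha : ∀ n k, ‖a n k‖ ≤ M := by
    intro n k
    have := norm_iteratedDeriv_le_of_forall_mem_ball_norm_le k one_pos (hF n) (hM n)
    rw [one_pow, div_one] at this
    simp only [a, norm_mul, norm_inv, Complex.norm_natCast]
    rwa [inv_mul_le_iff₀ (by positivity)]
  obtain ⟨A, hAM, t, ht, hA⟩ := exists_strictMono_forall_tendsto_of_norm_le ha
  refine ⟨fun z => ∑' k, A k * z ^ k, t, ht,
    tendstoLocallyUniformlyOn_of_forall_exists_nhds fun x hx => ?_⟩
  obtain ⟨r, hxr, hr1⟩ := exists_between (mem_ball_zero_iff.mp hx)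
  have hr0 : 0 ≤ r := (norm_nonneg x).trans hxr.le
  refine ⟨closedBall 0 r, mem_nhdsWithin_of_mem_nhds (mem_of_superset
    (isOpen_ball.mem_nhds (mem_ball_zero_iff.mpr hxr)) ball_subset_closedBall), ?_⟩
  refine tendstoUniformlyOn_closedBall_of_tendsto_coeff hr0 hr1 (fun m => ha (t m)) hAM hA
    (fun m z hz => ?_) (fun z hz => ?_)
  · have := Complex.hasSum_taylorSeries_on_ball (hF (t m)) (closedBall_subset_ball hr1 hz)
    simp only [sub_zero, smul_eq_mul] at this
    refine HasSum.congr_fun this fun k => ?_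
    simp only [a]
    ring
  · refine (Summable.of_norm_bounded ((summable_geometric_of_lt_one hr0 hr1).mul_left M)
      fun k => ?_).hasSum
    rw [norm_mul, norm_pow]
    have hM0 : 0 ≤ M := (norm_nonneg _).trans (hAM 0)
    gcongr
    · exact hAM k
    · exact mem_closedBall_zero_iff.mp hz

theorem AnalyticOnNhd.exists_closedBall_forall_mem_sphere_ne {f : ℂ → ℂ} {U : Set ℂ}
    (hf : AnalyticOnNhd ℂ f U) (hU : IsOpen U) (hUc : IsPreconnected U) {w z₀ : ℂ}
    (hz₀ : z₀ ∈ U) (hnc : ∃ z ∈ U, f z ≠ w) :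
    ∃ s > 0, closedBall z₀ s ⊆ U ∧ ∀ y ∈ sphere z₀ s, f y ≠ w := by
  have hfw : AnalyticOnNhd ℂ (fun z => f z - w) U := hf.sub analyticOnNhd_const
  rcases (hfw z₀ hz₀).eventually_eq_zero_or_eventually_ne_zero with h | h
  · obtain ⟨z, hz, hzw⟩ := hnc
    exact absurd (sub_eq_zero.mp (hfw.eqOn_zero_of_preconnected_of_eventuallyEq_zero hUc hz₀ h hz))
      hzw
  obtain ⟨ε, hε, hball⟩ := Metric.eventually_nhds_iff_ball.mp
    ((eventually_nhdsWithin_iff.mp h).and (hU.mem_nhds hz₀))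
  refine ⟨ε / 2, half_pos hε, fun y hy => (hball y (closedBall_subset_ball (half_lt_self hε) hy)).2,
    fun y hy => ?_⟩
  have hyz₀ : y ≠ z₀ := ne_of_mem_sphere hy (half_pos hε).ne'
  exact sub_ne_zero.mp ((hball y (sphere_subset_ball (half_lt_self hε) hy)).1 hyz₀)

theorem le_norm_of_forall_mem_sphere_le_norm {g : ℂ → ℂ} {z₀ : ℂ} {s δ : ℝ} (hs : 0 < s)
    (hδ : 0 < δ) (hg : DifferentiableOn ℂ g (closedBall z₀ s))
    (hg0 : ∀ z ∈ closedBall z₀ s, g z ≠ 0) (hsphere : ∀ y ∈ sphere z₀ s, δ ≤ ‖g y‖) :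
    δ ≤ ‖g z₀‖ := by
  have hinv : DiffContOnCl ℂ (fun z => (g z)⁻¹) (ball z₀ s) :=
    (closure_ball z₀ hs.ne' ▸ hg.inv hg0).diffContOnCl
  have := Complex.norm_le_of_forall_mem_frontier_norm_le isBounded_ball hinv
    (fun y hy => by
      rw [frontier_ball z₀ hs.ne'] at hy
      rw [norm_inv]
      exact inv_anti₀ hδ (hsphere y hy))
    (subset_closure (mem_ball_self hs))
  rwa [norm_inv, inv_le_inv₀ (norm_pos_iff.mpr (hg0 z₀ (mem_closedBall_self hs.le))) hδ] at this

-- Hurwitz's theorem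
theorem TendstoLocallyUniformlyOn.ne_of_forall_ne {G : ℕ → ℂ → ℂ} {f : ℂ → ℂ} {U : Set ℂ}
    (hTLU : TendstoLocallyUniformlyOn G f atTop U) (hU : IsOpen U) (hUc : IsPreconnected U)
    (hG : ∀ m, DifferentiableOn ℂ (G m) U) {w : ℂ} {wm : ℕ → ℂ} (hwm : Tendsto wm atTop (𝓝 w))
    (hne : ∀ m, ∀ z ∈ U, G m z ≠ wm m) (hnc : ∃ z ∈ U, f z ≠ w) {z₀ : ℂ} (hz₀ : z₀ ∈ U) :
    f z₀ ≠ w := by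
  intro hfz₀
  have hf : DifferentiableOn ℂ f U := hTLU.differentiableOn (Eventually.of_forall hG) hU
  obtain ⟨s, hs, hsU, hsphere⟩ :=
    (hf.analyticOnNhd hU).exists_closedBall_forall_mem_sphere_ne hU hUc hz₀ hnc
  obtain ⟨y₀, hy₀, hy₀min⟩ := (isCompact_sphere z₀ s).exists_isMinOn
    (NormedSpace.sphere_nonempty.mpr hs.le)
    ((hf.continuousOn.mono (sphere_subset_closedBall.trans hsU)).sub continuousOn_const).norm
  set δ := ‖f y₀ - w‖
  have hδ : 0 < δ := norm_pos_iff.mpr (sub_ne_zero.mpr (hsphere y₀ hy₀))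
  have hclose : ∀ᶠ m in atTop, ∀ y ∈ closedBall z₀ s, ‖(G m y - wm m) - (f y - w)‖ < δ / 2 := by
    have hTU := (tendstoLocallyUniformlyOn_iff_forall_isCompact hU).mp hTLU _ hsU
      (isCompact_closedBall z₀ s)
    filter_upwards [Metric.tendstoUniformlyOn_iff.mp hTU (δ / 4) (by positivity),
      Metric.tendsto_nhds.mp hwm (δ / 4) (by positivity)] with m hGm hwmm y hy
    rw [dist_comm, dist_eq_norm] at hwmm
    calc ‖(G m y - wm m) - (f y - w)‖ = ‖(G m y - f y) + (w - wm m)‖ := by ring_nf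
      _ ≤ ‖G m y - f y‖ + ‖w - wm m‖ := norm_add_le _ _
      _ < δ / 4 + δ / 4 := by
        rw [← dist_eq_norm, dist_comm]
        gcongr
        exact hGm y hy
      _ = δ / 2 := by ring
  obtain ⟨m, hm⟩ := hclose.exists
  have hcenter : ‖G m z₀ - wm m‖ < δ / 2 := by
    simpa [hfz₀] using hm z₀ (mem_closedBall_self hs.le)
  refine hcenter.not_ge <| le_norm_of_forall_mem_sphere_le_norm (g := fun y => G m y - wm m)
    hs (half_pos hδ) (((hG m).mono hsU).sub_const _)
    (fun z hz => sub_ne_zero.mpr (hne m z (hsU hz))) fun y hy => ?_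
  have hy_close := hm y (sphere_subset_closedBall hy)
  have hy_far : δ ≤ ‖f y - w‖ := hy₀min hy
  have := norm_sub_norm_le (f y - w) (G m y - wm m)
  rw [norm_sub_rev] at hy_close
  linarith

section HausdorffLimit

variable {K : Set ℂ} {Kn : ℕ → Set ℂ}

theorem eventually_subset_connectedComponentIn_ball_diff (hK : IsClosed K) (hK0 : K.Nonempty)
    (hfin : ∀ n, hausdorffEDist (Kn n) K ≠ ⊤)
    (hHaus : Tendsto (fun n => hausdorffDist (Kn n) K) atTop (𝓝 0)) {P : Set ℂ}
    (hP : IsCompact P) (hPc : IsPreconnected P) (hP0 : (0 : ℂ) ∈ P) (hPK : P ⊆ 𝒟 K) :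
    ∀ᶠ n in atTop, P ⊆ 𝒟 (Kn n) := by
  obtain ⟨p₀, hp₀, hp₀min⟩ :=
    hP.exists_isMinOn ⟨0, hP0⟩ (continuous_infDist_pt K).continuousOn
  have hδ : 0 < infDist p₀ K :=
    (hK.notMem_iff_infDist_pos hK0).mp (connectedComponentIn_subset _ _ (hPK hp₀)).2
  filter_upwards [hHaus.eventually (gt_mem_nhds hδ)] with n hn
  refine hPc.subset_connectedComponentIn hP0 fun p hp =>
    ⟨(connectedComponentIn_subset _ _ (hPK hp)).1, fun hpK => ?_⟩
  have hpn : infDist p K ≤ hausdorffDist (Kn n) K := infDist_le_hausdorffDist_of_mem hpK (hfin n)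
  have hpp₀ : infDist p₀ K ≤ infDist p K := hp₀min hp
  linarith

theorem exists_tendsto_of_mem_of_tendsto_hausdorffDist (hfin : ∀ n, hausdorffEDist (Kn n) K ≠ ⊤)
    (hHaus : Tendsto (fun n => hausdorffDist (Kn n) K) atTop (𝓝 0)) {w : ℂ} (hw : w ∈ K) :
    ∃ wn : ℕ → ℂ, (∀ n, wn n ∈ Kn n) ∧ Tendsto wn atTop (𝓝 w) := by
  have hclose : ∀ n, ∃ y ∈ Kn n, dist y w < hausdorffDist (Kn n) K + 1 / (n + 1) := fun n =>
    exists_dist_lt_of_hausdorffDist_lt' hw (lt_add_of_pos_right _ Nat.one_div_pos_of_nat)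
      (hfin n)
  choose wn hwn hdist using hclose
  refine ⟨wn, hwn, tendsto_iff_dist_tendsto_zero.mpr (squeeze_zero (fun _ => dist_nonneg)
    (fun n => (hdist n).le) ?_)⟩
  simpa using hHaus.add tendsto_one_div_add_atTop_nhds_zero_nat

theorem mapsTo_connectedComponentIn_of_tendstoLocallyUniformlyOn (h0K : (0 : ℂ) ∉ K)
    (hfin : ∀ n, hausdorffEDist (Kn n) K ≠ ⊤)
    (hHaus : Tendsto (fun n => hausdorffDist (Kn n) K) atTop (𝓝 0)) {G : ℕ → ℂ → ℂ}
    {f : ℂ → ℂ} (hG : ∀ n, DifferentiableOn ℂ (G n) (ball 0 1))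
    (hGK : ∀ n, MapsTo (G n) (ball 0 1) (𝒟 (Kn n)))
    (hTLU : TendstoLocallyUniformlyOn G f atTop (ball 0 1)) (hf0 : f 0 = 0)
    (hf' : deriv f 0 ≠ 0) : MapsTo f (ball 0 1) (𝒟 K) := by
  have hf : DifferentiableOn ℂ f (ball 0 1) :=
    hTLU.differentiableOn (Eventually.of_forall hG) isOpen_ball
  have hGball : ∀ n, ∀ z ∈ ball (0 : ℂ) 1, G n z ∈ ball 0 1 := fun n z hz =>
    (connectedComponentIn_subset _ _ (hGK n hz)).1
  have hfle : ∀ z ∈ ball (0 : ℂ) 1, ‖f z‖ ≤ 1 := fun z hz =>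
    le_of_tendsto (hTLU.tendsto_at hz).norm
      (Eventually.of_forall fun n => (mem_ball_zero_iff.mp (hGball n z hz)).le)
  -- a point where `‖f‖ = 1` would be an interior maximum, forcing `f` to be constant
  have hflt : ∀ z ∈ ball (0 : ℂ) 1, ‖f z‖ < 1 := by
    refine fun z hz => (hfle z hz).lt_of_ne fun hz1 => hf' ?_
    have hmax : IsMaxOn (norm ∘ f) (ball 0 1) z := fun y hy => by
      simpa [hz1] using hfle y hy
    have hconst : f =ᶠ[𝓝 0] fun _ => f z := eventually_of_mem (isOpen_ball.mem_nhds
      (mem_ball_self one_pos)) (Complex.eqOn_of_isPreconnected_of_isMaxOn_norm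
        (convex_ball 0 1).isPreconnected isOpen_ball hf hz hmax)
    exact hconst.deriv_eq.trans (deriv_const _ _)
  have hfK : ∀ z ∈ ball (0 : ℂ) 1, f z ∉ K := by
    intro z hz hzK
    obtain ⟨wn, hwn, hlim⟩ := exists_tendsto_of_mem_of_tendsto_hausdorffDist hfin hHaus hzK
    refine hTLU.ne_of_forall_ne isOpen_ball (convex_ball 0 1).isPreconnected hG hlim
      (fun n y hy hGy => (connectedComponentIn_subset _ _ (hGK n hy)).2 (hGy ▸ hwn n))
      ⟨0, mem_ball_self one_pos, fun h0 => h0K (hf0 ▸ h0 ▸ hzK)⟩ hz rfl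
  have himage : f '' ball 0 1 ⊆ 𝒟 K := by
    refine ((convex_ball 0 1).isPreconnected.image f hf.continuousOn).subset_connectedComponentIn
      ⟨0, mem_ball_self one_pos, hf0⟩ ?_
    rintro _ ⟨z, hz, rfl⟩
    exact ⟨mem_ball_zero_iff.mpr (hflt z hz), hfK z hz⟩
  exact fun z hz => himage (mem_image_of_mem f hz)

end HausdorffLimit

section CapacityLimit

variable {K : Set ℂ} {Kn : ℕ → Set ℂ} {ψ : ℂ → ℂ} {d : ℝ} {ψn : ℕ → ℂ → ℂ} {dn : ℕ → ℝ}

theorem IsCapacityMap.eventually_mul_le (hK : IsClosed K) (hK0 : K.Nonempty)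
    (hfin : ∀ n, hausdorffEDist (Kn n) K ≠ ⊤)
    (hHaus : Tendsto (fun n => hausdorffDist (Kn n) K) atTop (𝓝 0))
    (hψ : IsCapacityMap K ψ d) (hψn : ∀ n, IsCapacityMap (Kn n) (ψn n) (dn n)) {r : ℝ}
    (hr0 : 0 < r) (hr1 : r < 1) : ∀ᶠ n in atTop, dn n * r ≤ d := by
  obtain ⟨φ, hφ, hφ0, hφ', hφK, -⟩ := hψ.exists_rightInverse hK
  have hrball : closedBall (0 : ℂ) r ⊆ ball 0 1 := closedBall_subset_ball hr1
  have hφr : ContinuousOn φ (closedBall 0 r) := hφ.continuousOn.mono hrball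
  filter_upwards [eventually_subset_connectedComponentIn_ball_diff hK hK0 hfin hHaus
    ((isCompact_closedBall 0 r).image_of_continuousOn hφr)
    ((convex_closedBall 0 r).isPreconnected.image φ hφr)
    ⟨0, mem_closedBall_self hr0.le, hφ0⟩ ((hφK.mono_left hrball).image_subset)] with n hn
  have hscale : MapsTo (fun z : ℂ => (r : ℂ) * z) (ball 0 1) (closedBall 0 r) := fun z hz => by
    rw [mem_closedBall_zero_iff, norm_mul, Complex.norm_real, Real.norm_of_nonneg hr0.le]
    exact mul_le_of_le_one_right hr0.le (mem_ball_zero_iff.mp hz).le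
  have hscale' : HasDerivAt (fun z : ℂ => (r : ℂ) * z) r 0 := by
    simpa using (hasDerivAt_id (0 : ℂ)).const_mul (r : ℂ)
  have hφ'' : HasDerivAt φ (d : ℂ)⁻¹ ((r : ℂ) * 0) := by rwa [mul_zero]
  have hschwarz := (hψn n).mul_norm_le_one (f := φ ∘ fun z : ℂ => (r : ℂ) * z)
    (hφ.comp (differentiableOn_id.const_mul _) (hscale.mono_right hrball))
    (by simp [hφ0]) (hφ''.comp 0 hscale') fun z hz => hn (mem_image_of_mem φ (hscale hz))
  rwa [norm_mul, norm_inv, Complex.norm_real, Complex.norm_real, Real.norm_of_nonneg hψ.1.le,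
    Real.norm_of_nonneg hr0.le, ← mul_assoc, ← div_eq_mul_inv, div_mul_eq_mul_div,
    div_le_one hψ.1] at hschwarz

theorem IsCapacityMap.tendsto_of_tendstoLocallyUniformlyOn
    (hfin : ∀ n, hausdorffEDist (Kn n) K ≠ ⊤)
    (hHaus : Tendsto (fun n => hausdorffDist (Kn n) K) atTop (𝓝 0))
    (hψ : IsCapacityMap K ψ d) (hdn : ∀ n, 0 < dn n)
    (hupper : ∀ r ∈ Ioo (0 : ℝ) 1, ∀ᶠ n in atTop, dn n * r ≤ d) {φn : ℕ → ℂ → ℂ} {f : ℂ → ℂ}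
    (hφn : ∀ n, DifferentiableOn ℂ (φn n) (ball 0 1)) (hφn0 : ∀ n, φn n 0 = 0)
    (hφn' : ∀ n, HasDerivAt (φn n) (dn n : ℂ)⁻¹ 0)
    (hφnK : ∀ n, MapsTo (φn n) (ball 0 1) (𝒟 (Kn n)))
    (hTLU : TendstoLocallyUniformlyOn φn f atTop (ball 0 1)) :
    Tendsto dn atTop (𝓝 d) := by
  have hd := hψ.1
  have h0 : (0 : ℂ) ∈ ball 0 1 := mem_ball_self one_pos
  have hf : DifferentiableOn ℂ f (ball 0 1) :=
    hTLU.differentiableOn (Eventually.of_forall hφn) isOpen_ball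
  have hf0 : f 0 = 0 := tendsto_nhds_unique (hTLU.tendsto_at h0) (by simp [hφn0])
  have hderiv : Tendsto (fun n => (dn n)⁻¹) atTop (𝓝 ‖deriv f 0‖) := by
    have := ((hTLU.deriv (Eventually.of_forall hφn) isOpen_ball).tendsto_at h0).norm
    simpa [(hφn' _).deriv, abs_of_pos (hdn _)] using this
  have hlower : d⁻¹ ≤ ‖deriv f 0‖ := by
    have hlim : Tendsto (fun r : ℝ => r / d) (𝓝[<] 1) (𝓝 d⁻¹) := by
      simpa using (continuous_id.div_const d).continuousAt.tendsto.mono_left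
        (nhdsWithin_le_nhds (a := (1 : ℝ)))
    refine le_of_tendsto hlim (eventually_of_mem (Ioo_mem_nhdsLT one_pos) fun r hr => ?_)
    refine ge_of_tendsto hderiv ((hupper r hr).mono fun n hn => ?_)
    rwa [div_le_iff₀ hd, le_inv_mul_iff₀ (hdn n)]
  have hf' : deriv f 0 ≠ 0 := norm_pos_iff.mp ((inv_pos.mpr hd).trans_le hlower)
  have hschwarz : d * ‖deriv f 0‖ ≤ 1 := hψ.mul_norm_le_one hf hf0
    (hf.differentiableAt (isOpen_ball.mem_nhds h0)).hasDerivAt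
    (mapsTo_connectedComponentIn_of_tendstoLocallyUniformlyOn hψ.zero_mem.2 hfin hHaus hφn hφnK
      hTLU hf0 hf')
  have hnorm : ‖deriv f 0‖ = d⁻¹ :=
    le_antisymm (by rwa [← le_div_iff₀' hd, one_div] at hschwarz) hlower
  simpa [hnorm] using hderiv.inv₀ (by positivity)

theorem IsCapacityMap.tendsto_of_tendsto_hausdorffDist (hK : IsCompact K)
    (hKn : ∀ n, IsCompact (Kn n)) (hK0 : K.Nonempty) (hKn0 : ∀ n, (Kn n).Nonempty)
    (hHaus : Tendsto (fun n => hausdorffDist (Kn n) K) atTop (𝓝 0))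
    (hψ : IsCapacityMap K ψ d) (hψn : ∀ n, IsCapacityMap (Kn n) (ψn n) (dn n)) :
    Tendsto dn atTop (𝓝 d) := by
  have hfin : ∀ n, hausdorffEDist (Kn n) K ≠ ⊤ := fun n =>
    hausdorffEDist_ne_top_of_nonempty_of_bounded (hKn0 n) hK0 (hKn n).isBounded hK.isBounded
  have hupper : ∀ r ∈ Ioo (0 : ℝ) 1, ∀ᶠ n in atTop, dn n * r ≤ d := fun r hr =>
    hψ.eventually_mul_le hK.isClosed hK0 hfin hHaus hψn hr.1 hr.2
  choose φn hφn hφn0 hφn' hφnK _ using fun n => (hψn n).exists_rightInverse (hKn n).isClosed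
  refine tendsto_of_subseq_tendsto fun u hu => ?_
  obtain ⟨f, t, ht, hTLU⟩ := exists_strictMono_tendstoLocallyUniformlyOn_ball
    (fun m => hφn (u m)) fun m z hz =>
      (mem_ball_zero_iff.mp (connectedComponentIn_subset _ _ (hφnK (u m) hz)).1).le
  have hv : Tendsto (u ∘ t) atTop atTop := hu.comp ht.tendsto_atTop
  exact ⟨t, hψ.tendsto_of_tendstoLocallyUniformlyOn (Kn := Kn ∘ u ∘ t) (fun m => hfin _)
    (hHaus.comp hv) (fun m => (hψn _).1) (fun r hr => hv.eventually (hupper r hr))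
    (fun m => hφn _) (fun m => hφn0 _) (fun m => hφn' _) (fun m => hφnK _) hTLU⟩

end CapacityLimit

theorem capacity_continuous_hausdorff_general
    (βn : ℕ → I → ℂ) (β : I → ℂ)
    (hβnCont : ∀ n, Continuous (βn n)) (hβCont : Continuous β)
    (hHaus : Tendsto (fun n => Metric.hausdorffDist (range (βn n)) (range β))
      atTop (𝓝 0))
    (ψn : ℕ → ℂ → ℂ) (dn : ℕ → ℝ) (ψ : ℂ → ℂ) (d : ℝ)
    (hψn : ∀ n, IsCapacityMap (range (βn n)) (ψn n) (dn n))
    (hψ : IsCapacityMap (range β) ψ d) :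
    Tendsto (fun n => Real.log (dn n)) atTop (𝓝 (Real.log d)) :=
  (Real.continuousAt_log hψ.1.ne').tendsto.comp <|
    hψ.tendsto_of_tendsto_hausdorffDist (isCompact_range hβCont)
      (fun n => isCompact_range (hβnCont n)) (range_nonempty β) (fun _ => range_nonempty _)
      hHaus hψn

/-- **Continuity of capacity under Hausdorff convergence of curves.**  Let
`β_n, β : [0,1] → closure 𝔻 \ {0}` be curves with `β_n[0,1] → β[0,1]` in the Hausdorff
metric.  Then the capacity of `β_n[0,1]` from `0` tends to the capacity of `β[0,1]` from
`0`, where the capacity of a compact `K` is `log ψ'(0)` for `ψ` the normalized conformal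
map of the component of `0` in `𝔻 \ K` onto `𝔻`. -/
theorem capacity_continuous_hausdorff
    (βn : ℕ → I → ℂ) (β : I → ℂ)
    (hβnCont : ∀ n, Continuous (βn n)) (hβCont : Continuous β)
    (hβnRange : ∀ n t, ‖βn n t‖ ≤ 1 ∧ βn n t ≠ 0)
    (hβRange : ∀ t, ‖β t‖ ≤ 1 ∧ β t ≠ 0)
    (hHaus : Tendsto (fun n => Metric.hausdorffDist (range (βn n)) (range β))
      atTop (𝓝 0))
    (ψn : ℕ → ℂ → ℂ) (dn : ℕ → ℝ) (ψ : ℂ → ℂ) (d : ℝ)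
    (hψn : ∀ n, IsCapacityMap (range (βn n)) (ψn n) (dn n))
    (hψ : IsCapacityMap (range β) ψ d) :
    Tendsto (fun n => Real.log (dn n)) atTop (𝓝 (Real.log d)) :=
  capacity_continuous_hausdorff_general βn β hβnCont hβCont hHaus ψn dn ψ d hψn hψ
end

section
/- Let L be a two-dimensional lattice, X an L-valued bounded step distribution generating an irreducible aperiodic mean-zero random walk S_n with identity covariance, and let a(z) := Σ_{j=0}^∞ (P⁰[S_j = 0] − P⁰[S_j = −z]) be the potential kernel. Then Δ_X a(z) = 1 if z = 0 and Δ_X a(z) = 0 otherwise, where Δ_X f(z) := E[f(z+X)] − f(z). -/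
/-!
Summing the one-step identity `Δ_X P⁰[S_j = -·](z) = P⁰[S_{j+1} = -z] - P⁰[S_j = -z]` over
`j < N` telescopes: `Δ_X` of the `N`-th partial sum of `a` is `δ₀(z) - P⁰[S_N = -z]`. As `X` has
finite support, `Δ_X` commutes with the limit, so `P⁰[S_N = -z]` converges to
`δ₀(z) - Δ_X a(z)`. Convergence of the series defining `a(z)` forces its terms
`P⁰[S_N = 0] - P⁰[S_N = -z]` to tend to `0`, so this limit is a constant `c` independent of `z`;
and `c = 0`, because the `P⁰[S_N = ·]` are probability distributions on an infinite lattice.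
-/

open Filter
open scoped ENNReal Topology

/-- `n`-step transition probabilities of the random walk with step distribution `p`
(started at `0`), as a convolution power. -/
noncomputable def stepN (p : PMF (ℤ × ℤ)) : ℕ → (ℤ × ℤ) → ℝ≥0∞
  | 0, z => if z = 0 then 1 else 0
  | n + 1, z => ∑' y : ℤ × ℤ, stepN p n y * p (z - y)

/-- The discrete Laplacian associated with the step distribution `p`:
`Δ_X f(z) = E[f(z+X)] − f(z)`. -/
noncomputable def discLap (p : PMF (ℤ × ℤ)) (f : (ℤ × ℤ) → ℝ) (z : ℤ × ℤ) : ℝ :=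
  (∑' x : ℤ × ℤ, (p x).toReal * f (z + x)) - f z

namespace stepN

variable (p : PMF (ℤ × ℤ))

lemma tsum_eq_one : ∀ n, ∑' z, stepN p n z = 1
  | 0 => by simp [stepN]
  | n + 1 => by
    have hshift (y : ℤ × ℤ) : ∑' z, p (z - y) = 1 :=
      ((Equiv.subRight y).tsum_eq (fun w => p w)).trans p.tsum_coe
    simp only [stepN]
    rw [ENNReal.tsum_comm]
    simp_rw [ENNReal.tsum_mul_left, hshift, mul_one]
    exact tsum_eq_one n

lemma ne_top (n : ℕ) (z : ℤ × ℤ) : stepN p n z ≠ ⊤ :=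
  ne_top_of_le_ne_top ENNReal.one_ne_top (tsum_eq_one p n ▸ ENNReal.le_tsum z)

lemma sum_toReal_le_one (n : ℕ) (s : Finset (ℤ × ℤ)) : ∑ z ∈ s, (stepN p n z).toReal ≤ 1 := by
  rw [← ENNReal.toReal_sum fun z _ => ne_top p n z]
  exact ENNReal.toReal_le_of_le_ofReal zero_le_one
    (ENNReal.ofReal_one ▸ tsum_eq_one p n ▸ ENNReal.sum_le_tsum s)

end stepN

noncomputable def potentialPartialSum (p : PMF (ℤ × ℤ)) (N : ℕ) (z : ℤ × ℤ) : ℝ :=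
  ∑ j ∈ Finset.range N, ((stepN p j 0).toReal - (stepN p j (-z)).toReal)

lemma PMF.sum_toReal_eq_one {α : Type*} (p : PMF α) {F : Finset α} (hF : ∀ x ∉ F, p x = 0) :
    ∑ x ∈ F, (p x).toReal = 1 := by
  have hfinite : ∑' x, p x = ∑ x ∈ F, p x := tsum_eq_sum hF
  rw [← ENNReal.toReal_sum fun x _ => p.apply_ne_top x, ← hfinite, p.tsum_coe, ENNReal.toReal_one]

lemma tendsto_zero_of_tendsto_sum_range {G : Type*} [AddCommGroup G] [TopologicalSpace G]
    [IsTopologicalAddGroup G] {f : ℕ → G} {a : G}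
    (h : Tendsto (fun N => ∑ j ∈ Finset.range N, f j) atTop (𝓝 a)) :
    Tendsto f atTop (𝓝 0) := by
  have hshift := ((h.comp (tendsto_add_atTop_nat 1)).sub h)
  simpa only [sub_self, Function.comp_def, Finset.sum_range_succ, add_sub_cancel_left] using hshift

lemma eq_zero_of_tendsto_of_sum_le_one {α : Type*} [Infinite α] {u : ℕ → α → ℝ} {c : ℝ}
    (hnonneg : ∀ N z, 0 ≤ u N z) (hsum : ∀ N (s : Finset α), ∑ z ∈ s, u N z ≤ 1)
    (hc : ∀ z, Tendsto (fun N => u N z) atTop (𝓝 c)) : c = 0 := by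
  have hc_nonneg : 0 ≤ c := ge_of_tendsto' (hc (Classical.arbitrary α)) fun N => hnonneg N _
  have hcard (n : ℕ) : n * c ≤ 1 := by
    obtain ⟨s, hs⟩ := Infinite.exists_subset_card_eq α n
    have hlim : Tendsto (fun N => ∑ z ∈ s, u N z) atTop (𝓝 (∑ _z ∈ s, c)) :=
      tendsto_finsetSum s fun z _ => hc z
    simpa [hs] using le_of_tendsto' hlim fun N => hsum N s
  refine le_antisymm (not_lt.1 fun hpos => ?_) hc_nonneg
  obtain ⟨n, hn⟩ := exists_nat_gt c⁻¹
  have := (inv_lt_iff_one_lt_mul₀ hpos).1 hn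
  linarith [hcard n]

section FiniteSupport

variable {p : PMF (ℤ × ℤ)} {F : Finset (ℤ × ℤ)} (hF : ∀ x ∉ F, p x = 0)
include hF

lemma stepN_succ_toReal (n : ℕ) (z : ℤ × ℤ) :
    (stepN p (n + 1) z).toReal = ∑ x ∈ F, (p x).toReal * (stepN p n (z - x)).toReal := by
  have hreindex := (Equiv.subLeft z).tsum_eq fun y => stepN p n y * p (z - y)
  simp only [Equiv.subLeft_apply, sub_sub_cancel] at hreindex
  rw [stepN, ← hreindex, tsum_eq_sum fun x hx => by rw [hF x hx, mul_zero],
    ENNReal.toReal_sum fun x _ => ENNReal.mul_ne_top (stepN.ne_top p n _) (p.apply_ne_top x)]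
  simp only [ENNReal.toReal_mul, mul_comm]

lemma discLap_eq_sum (f : (ℤ × ℤ) → ℝ) (z : ℤ × ℤ) :
    discLap p f z = ∑ x ∈ F, (p x).toReal * f (z + x) - f z := by
  rw [discLap, tsum_eq_sum fun x hx => by rw [hF x hx, ENNReal.toReal_zero, zero_mul]]

lemma discLap_const (c : ℝ) (z : ℤ × ℤ) : discLap p (fun _ => c) z = 0 := by
  rw [discLap_eq_sum hF, ← Finset.sum_mul, p.sum_toReal_eq_one hF, one_mul, sub_self]

lemma discLap_sub (f g : (ℤ × ℤ) → ℝ) (z : ℤ × ℤ) :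
    discLap p (f - g) z = discLap p f z - discLap p g z := by
  simp only [discLap_eq_sum hF, Pi.sub_apply, mul_sub, Finset.sum_sub_distrib]
  ring

lemma discLap_sum {ι : Type*} (s : Finset ι) (f : ι → (ℤ × ℤ) → ℝ) (z : ℤ × ℤ) :
    discLap p (fun w => ∑ j ∈ s, f j w) z = ∑ j ∈ s, discLap p (f j) z := by
  simp only [discLap_eq_sum hF, Finset.mul_sum, Finset.sum_sub_distrib]
  rw [Finset.sum_comm]

lemma tendsto_discLap {ι : Type*} {l : Filter ι} {f : ι → (ℤ × ℤ) → ℝ} {g : (ℤ × ℤ) → ℝ}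
    (hf : ∀ z, Tendsto (fun i => f i z) l (𝓝 (g z))) (z : ℤ × ℤ) :
    Tendsto (fun i => discLap p (f i) z) l (𝓝 (discLap p g z)) := by
  simp only [discLap_eq_sum hF]
  exact (tendsto_finsetSum F fun x _ => (hf (z + x)).const_mul _).sub (hf z)

lemma discLap_stepN_neg (n : ℕ) (z : ℤ × ℤ) :
    discLap p (fun w => (stepN p n (-w)).toReal) z
      = (stepN p (n + 1) (-z)).toReal - (stepN p n (-z)).toReal := by
  simp only [discLap_eq_sum hF, stepN_succ_toReal hF, neg_add, sub_eq_add_neg]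

lemma discLap_potentialPartialSum (N : ℕ) (z : ℤ × ℤ) :
    discLap p (potentialPartialSum p N) z
      = (stepN p 0 (-z)).toReal - (stepN p N (-z)).toReal := by
  unfold potentialPartialSum
  rw [discLap_sum hF]
  calc ∑ j ∈ Finset.range N,
        discLap p (fun w => (stepN p j 0).toReal - (stepN p j (-w)).toReal) z
      = ∑ j ∈ Finset.range N, ((stepN p j (-z)).toReal - (stepN p (j + 1) (-z)).toReal) := by
        refine Finset.sum_congr rfl fun j _ => ?_
        rw [← Pi.sub_def (fun _ => _) fun w => (stepN p j (-w)).toReal, discLap_sub hF,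
          discLap_const hF, discLap_stepN_neg hF]
        ring
    _ = (stepN p 0 (-z)).toReal - (stepN p N (-z)).toReal :=
        Finset.sum_range_sub' (fun j => (stepN p j (-z)).toReal) N

end FiniteSupport

theorem potential_kernel_laplacian_general
    (p : PMF (ℤ × ℤ))
    (hbdd : {x : ℤ × ℤ | p x ≠ 0}.Finite)
    (a : (ℤ × ℤ) → ℝ)
    (ha : ∀ z : ℤ × ℤ, Tendsto
      (fun N => ∑ j ∈ Finset.range N, ((stepN p j 0).toReal - (stepN p j (-z)).toReal))
      atTop (𝓝 (a z))) :
    discLap p a 0 = 1 ∧ ∀ z : ℤ × ℤ, z ≠ 0 → discLap p a z = 0 := by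
  have hF : ∀ x ∉ hbdd.toFinset, p x = 0 := fun x hx => not_not.1 (hbdd.mem_toFinset.not.1 hx)
  have hlim (z : ℤ × ℤ) : Tendsto (fun N => (stepN p N (-z)).toReal) atTop
      (𝓝 ((stepN p 0 (-z)).toReal - discLap p a z)) := by
    have hpartial := tendsto_discLap hF (f := potentialPartialSum p) ha z
    simp only [discLap_potentialPartialSum hF] at hpartial
    simpa using (tendsto_const_nhds (x := (stepN p 0 (-z)).toReal)).sub hpartial
  set c := (stepN p 0 0).toReal - discLap p a 0
  have hconst (z : ℤ × ℤ) : (stepN p 0 (-z)).toReal - discLap p a z = c := by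
    refine tendsto_nhds_unique (hlim z) ?_
    simpa using (hlim 0).sub (tendsto_zero_of_tendsto_sum_range (ha z))
  have hc : c = 0 :=
    eq_zero_of_tendsto_of_sum_le_one (u := fun N z => (stepN p N z).toReal)
      (fun _ _ => ENNReal.toReal_nonneg) (stepN.sum_toReal_le_one p)
      fun z => by simpa [← hconst (-z)] using hlim (-z)
  have hlap (z : ℤ × ℤ) : discLap p a z = (stepN p 0 (-z)).toReal := by linarith [hconst z]
  exact ⟨by simp [hlap, stepN], fun z hz => by simp [hlap, stepN, hz]⟩

/-- **The potential kernel is the fundamental solution of the discrete Laplacian.**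
Let `X` be a bounded-support step distribution on the lattice `ℤ²` generating an
irreducible aperiodic mean-zero random walk with identity covariance, and let
`a(z) = Σ_{j≥0} (P⁰[S_j = 0] − P⁰[S_j = −z])` be the potential kernel (the series
converging for such walks).  Then `Δ_X a(0) = 1` and `Δ_X a(z) = 0` for `z ≠ 0`. -/
theorem potential_kernel_laplacian
    (p : PMF (ℤ × ℤ))
    (hbdd : {x : ℤ × ℤ | p x ≠ 0}.Finite)
    (hirr : ∀ z : ℤ × ℤ, ∃ n : ℕ, 0 < stepN p n z)
    (haper : ∃ N : ℕ, ∀ n ≥ N, 0 < stepN p n 0)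
    (hmean1 : (∑' x : ℤ × ℤ, (p x).toReal * (x.1 : ℝ)) = 0)
    (hmean2 : (∑' x : ℤ × ℤ, (p x).toReal * (x.2 : ℝ)) = 0)
    (hcov11 : (∑' x : ℤ × ℤ, (p x).toReal * ((x.1 : ℝ) * (x.1 : ℝ))) = 1)
    (hcov22 : (∑' x : ℤ × ℤ, (p x).toReal * ((x.2 : ℝ) * (x.2 : ℝ))) = 1)
    (hcov12 : (∑' x : ℤ × ℤ, (p x).toReal * ((x.1 : ℝ) * (x.2 : ℝ))) = 0)
    (a : (ℤ × ℤ) → ℝ)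
    (ha : ∀ z : ℤ × ℤ, Tendsto
      (fun N => ∑ j ∈ Finset.range N, ((stepN p j 0).toReal - (stepN p j (-z)).toReal))
      atTop (𝓝 (a z))) :
    discLap p a 0 = 1 ∧ ∀ z : ℤ × ℤ, z ≠ 0 → discLap p a z = 0 :=
  potential_kernel_laplacian_general p hbdd a ha
end
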